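/- arXiv:2209.12241 — 5 statements merged into one kernel-verified Lean document; each statement's English description precedes it below -/
import Mathlib

section
/- Let E be a real inner product space and a, b ∈ E. Suppose γ* ∈ [0,1] satisfies ‖γ*·a + (1−γ*)·b‖ ≤ ‖γ·a + (1−γ)·b‖ for all γ ∈ [0,1], and set d = γ*·a + (1−γ*)·b. Then ⟨a, d⟩ ≥ ‖d‖² and ⟨b, d⟩ ≥ ‖d‖² (the KKT consequence underlying MGDA: the min-norm point is a weighted descent direction for both objectives). -/
/-! The point `d` is the element of minimal norm of the segment `[a, b]`, i.e. the projection
of `0` onto that convex set. The variational characterisation of projections onto convex sets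
gives `⟪0 - d, x - d⟫ ≤ 0` for every `x` of the segment, which for `x = a` and `x = b` is the
claim. -/

open scoped RealInnerProductSpace

section MinNorm

variable {E : Type*} [NormedAddCommGroup E] [InnerProductSpace ℝ E]

theorem norm_sq_le_inner_of_isMinOn_norm {K : Set E} (hK : Convex ℝ K) {d x : E} (hd : d ∈ K)
    (hmin : IsMinOn (‖·‖) K d) (hx : x ∈ K) : ‖d‖ ^ 2 ≤ ⟪x, d⟫ := by
  have hinf : ‖0 - d‖ = ⨅ w : K, ‖0 - (w : E)‖ := by
    have : Nonempty K := ⟨⟨d, hd⟩⟩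
    have hbdd : BddBelow (Set.range fun w : K => ‖0 - (w : E)‖) := ⟨0, by
      rintro _ ⟨w, rfl⟩
      exact norm_nonneg _⟩
    refine le_antisymm (le_ciInf fun w => ?_) (ciInf_le hbdd ⟨d, hd⟩)
    simpa only [zero_sub, norm_neg] using isMinOn_iff.mp hmin w w.2
  have hvar := (norm_eq_iInf_iff_real_inner_le_zero hK hd).mp hinf x hx
  rw [zero_sub, inner_neg_left, inner_sub_right, real_inner_self_eq_norm_sq,
    real_inner_comm] at hvar
  linarith

theorem isMinOn_norm_segment_of_forall_norm_le {a b : E} {γs : ℝ}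
    (hmin : ∀ γ ∈ Set.Icc (0 : ℝ) 1, ‖γs • a + (1 - γs) • b‖ ≤ ‖γ • a + (1 - γ) • b‖) :
    IsMinOn (‖·‖) (segment ℝ a b) (γs • a + (1 - γs) • b) := by
  rintro _ ⟨s, t, hs, ht, hst, rfl⟩
  obtain rfl : t = 1 - s := by linarith
  exact hmin s ⟨hs, by linarith⟩

end MinNorm

/-- KKT consequence underlying MGDA: if `γ* ∈ [0,1]` minimizes `γ ↦ ‖γ•a + (1-γ)•b‖`
over `[0,1]` and `d = γ*•a + (1-γ*)•b`, then `⟪a, d⟫ ≥ ‖d‖²` and `⟪b, d⟫ ≥ ‖d‖²`. -/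
theorem stmt_6 {E : Type*} [NormedAddCommGroup E] [InnerProductSpace ℝ E] (a b : E)
    (γs : ℝ) (hγs : γs ∈ Set.Icc (0 : ℝ) 1)
    (hmin : ∀ γ ∈ Set.Icc (0 : ℝ) 1, ‖γs • a + (1 - γs) • b‖ ≤ ‖γ • a + (1 - γ) • b‖)
    (d : E) (hd : d = γs • a + (1 - γs) • b) :
    ‖d‖ ^ 2 ≤ ⟪a, d⟫ ∧ ‖d‖ ^ 2 ≤ ⟪b, d⟫ := by
  subst hd
  have hd_mem : γs • a + (1 - γs) • b ∈ segment ℝ a b :=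
    ⟨γs, 1 - γs, hγs.1, sub_nonneg.mpr hγs.2, add_sub_cancel _ _, rfl⟩
  have hd_min := isMinOn_norm_segment_of_forall_norm_le hmin
  exact ⟨norm_sq_le_inner_of_isMinOn_norm (convex_segment a b) hd_mem hd_min
      (left_mem_segment ℝ a b),
    norm_sq_le_inner_of_isMinOn_norm (convex_segment a b) hd_mem hd_min
      (right_mem_segment ℝ a b)⟩
end

section
/- Let E be a real inner product space and a, b ∈ E. Suppose γ* ∈ [0,1] satisfies ‖γ*·a + (1−γ*)·b‖ ≤ ‖γ·a + (1−γ)·b‖ for all γ ∈ [0,1], and set d = γ*·a + (1−γ*)·b. If d ≠ 0, then ⟨a, d⟩ > 0 and ⟨b, d⟩ > 0; i.e., −d is a strict common descent direction for both the Stability and the Plasticity objective. -/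
/-!
The point `d` is the element of least norm on the segment `[b, a]`, i.e. the projection of `0`
onto that convex set. The variational characterization of projections gives `⟪d, w - d⟫ ≥ 0`
for every `w` on the segment; taking `w = a` and `w = b` yields `⟪a, d⟫, ⟪b, d⟫ ≥ ‖d‖² > 0`.
-/

open scoped RealInnerProductSpace

theorem norm_sq_le_real_inner_of_forall_norm_le {E : Type*} [NormedAddCommGroup E]
    [InnerProductSpace ℝ E] {K : Set E} (hK : Convex ℝ K) {v : E} (hv : v ∈ K)
    (hmin : ∀ w ∈ K, ‖v‖ ≤ ‖w‖) {w : E} (hw : w ∈ K) : ‖v‖ ^ 2 ≤ ⟪w, v⟫ := by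
  have : Nonempty K := ⟨⟨v, hv⟩⟩
  have hproj : ‖0 - v‖ = ⨅ w : K, ‖0 - (w : E)‖ :=
    le_antisymm (le_ciInf fun w => by simpa using hmin w w.2)
      (ciInf_le ⟨0, by rintro _ ⟨w, rfl⟩; exact norm_nonneg _⟩ (⟨v, hv⟩ : K))
  have hvar := (norm_eq_iInf_iff_real_inner_le_zero hK hv).1 hproj w hw
  rw [zero_sub, inner_neg_left, inner_sub_right, real_inner_self_eq_norm_sq,
    real_inner_comm] at hvar
  linarith

/-- If `γ* ∈ [0,1]` minimizes `γ ↦ ‖γ•a + (1-γ)•b‖` over `[0,1]`,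
`d = γ*•a + (1-γ*)•b`, and `d ≠ 0`, then `⟪a, d⟫ > 0` and `⟪b, d⟫ > 0`:
`-d` is a strict common descent direction for both objectives. -/
theorem stmt_7 {E : Type*} [NormedAddCommGroup E] [InnerProductSpace ℝ E] (a b : E)
    (γs : ℝ) (hγs : γs ∈ Set.Icc (0 : ℝ) 1)
    (hmin : ∀ γ ∈ Set.Icc (0 : ℝ) 1, ‖γs • a + (1 - γs) • b‖ ≤ ‖γ • a + (1 - γ) • b‖)
    (d : E) (hd : d = γs • a + (1 - γs) • b) (hne : d ≠ 0) :
    0 < ⟪a, d⟫ ∧ 0 < ⟪b, d⟫ := by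
  have hd_mem : d ∈ segment ℝ b a :=
    ⟨1 - γs, γs, by linarith [hγs.2], hγs.1, by ring, by rw [hd, add_comm]⟩
  have hd_min : ∀ w ∈ segment ℝ b a, ‖d‖ ≤ ‖w‖ := by
    rintro w ⟨p, q, hp, hq, hpq, rfl⟩
    obtain rfl : p = 1 - q := by linarith
    simpa [hd, add_comm] using hmin q ⟨hq, by linarith⟩
  have hd_pos : 0 < ‖d‖ ^ 2 := by positivity
  have ha := norm_sq_le_real_inner_of_forall_norm_le (convex_segment b a) hd_mem hd_min
    (right_mem_segment ℝ b a)
  have hb := norm_sq_le_real_inner_of_forall_norm_le (convex_segment b a) hd_mem hd_min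
    (left_mem_segment ℝ b a)
  exact ⟨hd_pos.trans_le ha, hd_pos.trans_le hb⟩
end

section
/- (Strong duality / primal optimality for the steepest-gradient problem.) Let E be a real inner product space and g₁, g₂ ∈ E. Suppose γ* ∈ [0,1] satisfies ‖γ*·g₁ + (1−γ*)·g₂‖ ≤ ‖γ·g₁ + (1−γ)·g₂‖ for all γ ∈ [0,1], and set g = γ*·g₁ + (1−γ*)·g₂, d* = −g, α* = −‖g‖². Then (d*, α*) is primal feasible (⟨g₁, d*⟩ ≤ α* and ⟨g₂, d*⟩ ≤ α*), and for every d ∈ E, α ∈ ℝ with ⟨g₁, d⟩ ≤ α and ⟨g₂, d⟩ ≤ α we have α* + (1/2)‖d*‖² ≤ α + (1/2)‖d‖²; i.e., (d*, α*) is an optimal solution of the primal problem, with optimal value −(1/2)‖g‖². -/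
open scoped RealInnerProductSpace

/-!
The minimizer `g` of the norm on the segment `[g₁, g₂]` satisfies the variational inequality
`‖g‖² ≤ ⟪w, g⟫` for every `w` in the segment, in particular for `w = g₁, g₂`; this is primal
feasibility of `(-g, -‖g‖²)`. Conversely, any feasible `(d, α)` has `⟪g, d⟫ ≤ α` because `g` is a
convex combination of `g₁, g₂`, and then `α + ½‖d‖² ≥ ⟪g, d⟫ + ½‖d‖² ≥ -½‖g‖²`, by `‖d + g‖² ≥ 0`.
-/

section

variable {E : Type*} [NormedAddCommGroup E] [InnerProductSpace ℝ E]

theorem norm_sq_le_real_inner_of_isMinOn_norm {K : Set E} (hK : Convex ℝ K) {v : E} (hv : v ∈ K)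
    (hmin : IsMinOn norm K v) {w : E} (hw : w ∈ K) : ‖v‖ ^ 2 ≤ ⟪w, v⟫ := by
  have : Nonempty K := ⟨⟨v, hv⟩⟩
  have hinf : ‖0 - v‖ = ⨅ w : K, ‖0 - (w : E)‖ := by
    simp only [zero_sub, norm_neg]
    have hbdd : BddBelow (Set.range fun w : K => ‖(w : E)‖) :=
      ⟨0, Set.forall_mem_range.2 fun _ => norm_nonneg _⟩
    exact le_antisymm (le_ciInf fun w => hmin w.2) (ciInf_le hbdd ⟨v, hv⟩)
  have := (norm_eq_iInf_iff_real_inner_le_zero hK hv).1 hinf w hw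
  rw [zero_sub, inner_neg_left, inner_sub_right, real_inner_self_eq_norm_sq, real_inner_comm] at this
  linarith

theorem real_inner_le_of_mem_segment {x y z d : E} {α : ℝ} (hx : ⟪x, d⟫ ≤ α) (hy : ⟪y, d⟫ ≤ α)
    (hz : z ∈ segment ℝ x y) : ⟪z, d⟫ ≤ α :=
  (convex_halfSpace_le (innerₛₗ ℝ |>.flip d).isLinear α).segment_subset hx hy hz

theorem neg_half_norm_sq_le_real_inner_add (g d : E) :
    -(1 / 2) * ‖g‖ ^ 2 ≤ ⟪g, d⟫ + (1 / 2) * ‖d‖ ^ 2 := by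
  have := norm_add_sq_real g d
  nlinarith [sq_nonneg ‖g + d‖]

end

/-- Strong duality / primal optimality for the steepest-gradient problem: if
`γ* ∈ [0,1]` solves the MGDA min-norm problem and `g = γ*•g₁ + (1-γ*)•g₂`,
then `(d*, α*) = (-g, -‖g‖²)` is primal feasible and optimal, with value `-(1/2)‖g‖²`. -/
theorem stmt_11 {E : Type*} [NormedAddCommGroup E] [InnerProductSpace ℝ E] (g₁ g₂ : E)
    (γs : ℝ) (hγs : γs ∈ Set.Icc (0 : ℝ) 1)
    (hmin : ∀ γ ∈ Set.Icc (0 : ℝ) 1, ‖γs • g₁ + (1 - γs) • g₂‖ ≤ ‖γ • g₁ + (1 - γ) • g₂‖)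
    (g ds : E) (αs : ℝ) (hg : g = γs • g₁ + (1 - γs) • g₂) (hds : ds = -g)
    (hαs : αs = -‖g‖ ^ 2) :
    (⟪g₁, ds⟫ ≤ αs ∧ ⟪g₂, ds⟫ ≤ αs) ∧
      (∀ (d : E) (α : ℝ), ⟪g₁, d⟫ ≤ α → ⟪g₂, d⟫ ≤ α →
        αs + (1 / 2) * ‖ds‖ ^ 2 ≤ α + (1 / 2) * ‖d‖ ^ 2) ∧
      αs + (1 / 2) * ‖ds‖ ^ 2 = -(1 / 2) * ‖g‖ ^ 2 := by
  have hg_mem : g ∈ segment ℝ g₁ g₂ := ⟨γs, 1 - γs, hγs.1, by linarith [hγs.2], by ring, hg.symm⟩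
  have hg_min : IsMinOn norm (segment ℝ g₁ g₂) g := by
    rintro _ ⟨a, b, ha, hb, hab, rfl⟩
    obtain rfl : b = 1 - a := by linarith
    exact hg ▸ hmin a ⟨ha, by linarith⟩
  have hvi : ∀ w ∈ segment ℝ g₁ g₂, ‖g‖ ^ 2 ≤ ⟪w, g⟫ := fun _ =>
    norm_sq_le_real_inner_of_isMinOn_norm (convex_segment g₁ g₂) hg_mem hg_min
  have hvalue : αs + (1 / 2) * ‖ds‖ ^ 2 = -(1 / 2) * ‖g‖ ^ 2 := by
    rw [hαs, hds, norm_neg]; ring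
  subst hds hαs
  refine ⟨⟨?_, ?_⟩, fun d α hd₁ hd₂ => ?_, hvalue⟩
  · simpa [inner_neg_right] using hvi g₁ (left_mem_segment ℝ g₁ g₂)
  · simpa [inner_neg_right] using hvi g₂ (right_mem_segment ℝ g₁ g₂)
  · rw [hvalue]
    linarith [real_inner_le_of_mem_segment hd₁ hd₂ hg_mem, neg_half_norm_sq_le_real_inner_add g d]
end

section
/- (Implicit differentiation underlying the Influence Function, parameter level.) Let E be a real Banach space, θ : ℝ → E a curve of perturbed minimizers differentiable at 0, G : E → E (the gradient field of the training loss) differentiable at θ(0) with derivative H := fderiv G (θ(0)) a continuous linear equivalence of E (invertible Hessian), and v : E → E (the gradient field of the perturbed example's loss) continuous at θ(0). If the first-order stationarity condition G(θ(ε)) + ε·v(θ(ε)) = 0 holds for all ε ∈ ℝ, then the derivative of θ at 0 equals −H⁻¹(v(θ(0))). -/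
open Asymptotics Topology

/-- The product rule for `y ↦ (y - x) • c y` at `x` needs only continuity of `c`:
the remainder is `(y - x) • (c y - c x) = O(y - x) • o(1)`. -/
theorem hasDerivAt_sub_smul_of_continuousAt {𝕜 E : Type*} [NontriviallyNormedField 𝕜]
    [NormedAddCommGroup E] [NormedSpace 𝕜 E] {c : 𝕜 → E} {x : 𝕜} (hc : ContinuousAt c x) :
    HasDerivAt (fun y => (y - x) • c y) (c x) x := by
  rw [hasDerivAt_iff_isLittleO]
  have hc' : (fun y => c y - c x) =o[𝓝 x] (fun _ => (1 : 𝕜)) := by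
    rw [isLittleO_one_iff]
    simpa using hc.tendsto.sub_const (c x)
  have := (isBigO_refl (fun y => y - x) (𝓝 x)).smul_isLittleO hc'
  simp only [smul_eq_mul, mul_one] at this
  refine this.congr_left fun y => ?_
  simp [smul_sub]

theorem stmt_12_general {E : Type*} [NormedAddCommGroup E] [NormedSpace ℝ E]
    (θ : ℝ → E) (G v : E → E) (H : E ≃L[ℝ] E)
    (hθ : DifferentiableAt ℝ θ 0)
    (hG : DifferentiableAt ℝ G (θ 0))
    (hH : fderiv ℝ G (θ 0) = (H : E →L[ℝ] E))
    (hv : ContinuousAt v (θ 0))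
    (hstat : ∀ ε : ℝ, G (θ ε) + ε • v (θ ε) = 0) :
    deriv θ 0 = -H.symm (v (θ 0)) := by
  have hGθ : HasDerivAt (fun ε => G (θ ε)) (H (deriv θ 0)) 0 :=
    (hH ▸ hG.hasFDerivAt : HasFDerivAt G (H : E →L[ℝ] E) (θ 0)).comp_hasDerivAt 0 hθ.hasDerivAt
  have hvθ : HasDerivAt (fun ε : ℝ => ε • v (θ ε)) (v (θ 0)) 0 := by
    simpa using hasDerivAt_sub_smul_of_continuousAt (hv.comp hθ.continuousAt)
  have hlin : H (deriv θ 0) + v (θ 0) = 0 := by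
    have hsum : HasDerivAt (fun ε => G (θ ε) + ε • v (θ ε)) _ 0 := hGθ.add hvθ
    simp only [hstat] at hsum
    exact hsum.unique (hasDerivAt_const 0 0)
  rw [← H.symm_apply_apply (deriv θ 0), eq_neg_of_add_eq_zero_left hlin, map_neg]

/-- Implicit differentiation underlying the Influence Function (parameter level):
if `G(θ ε) + ε • v(θ ε) = 0` for all `ε`, with `H = fderiv ℝ G (θ 0)` an invertible
continuous linear map and `v` continuous at `θ 0`, then `deriv θ 0 = -H⁻¹ (v (θ 0))`. -/
theorem stmt_12 {E : Type*} [NormedAddCommGroup E] [NormedSpace ℝ E] [CompleteSpace E]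
    (θ : ℝ → E) (G v : E → E) (H : E ≃L[ℝ] E)
    (hθ : DifferentiableAt ℝ θ 0)
    (hG : DifferentiableAt ℝ G (θ 0))
    (hH : fderiv ℝ G (θ 0) = (H : E →L[ℝ] E))
    (hv : ContinuousAt v (θ 0))
    (hstat : ∀ ε : ℝ, G (θ ε) + ε • v (θ ε) = 0) :
    deriv θ 0 = -H.symm (v (θ 0)) :=
  stmt_12_general θ G v H hθ hG hH hv hstat
end

section
/- (Influence Function on a test loss, Eq. 6 of the paper, scalar-perturbation case.) Let E be a real Banach space, θ : ℝ → E differentiable at 0, G : E → E differentiable at θ(0) with derivative H := fderiv G (θ(0)) a continuous linear equivalence of E, v : E → E continuous at θ(0), and suppose G(θ(ε)) + ε·v(θ(ε)) = 0 for all ε ∈ ℝ. Let ℓ : E → ℝ (the test loss) be differentiable at θ(0). Then the derivative at ε = 0 of the composite ε ↦ ℓ(θ(ε)) equals −(fderiv ℓ (θ(0)))(H⁻¹(v(θ(0)))); i.e., the example influence on the test loss is I = −∇_θ ℓ(D^tst, θ̂) H⁻¹ ∇_θ ℓ(x^trn, θ̂). -/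
open Filter Topology

/-- Slope at `0` of `ε ↦ ε • w ε` is `w ε` itself, so continuity of `w` suffices. -/
theorem hasDerivAt_smul_self_of_continuousAt {𝕜 E : Type*} [NontriviallyNormedField 𝕜]
    [NormedAddCommGroup E] [NormedSpace 𝕜 E] {w : 𝕜 → E} (hw : ContinuousAt w 0) :
    HasDerivAt (fun ε => ε • w ε) (w 0) 0 := by
  rw [hasDerivAt_iff_tendsto_slope]
  refine (hw.tendsto.mono_left nhdsWithin_le_nhds).congr' ?_
  filter_upwards [self_mem_nhdsWithin] with ε (hε : ε ≠ 0)
  simp [slope_def_module, smul_smul, hε]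

/-- Implicit differentiation: differentiating the stationarity condition at `0` gives
`H (θ' 0) = -v (θ 0)`. -/
theorem hasDerivAt_of_add_smul_eq_zero {E : Type*} [NormedAddCommGroup E] [NormedSpace ℝ E]
    {θ : ℝ → E} {G v : E → E} {H : E ≃L[ℝ] E}
    (hθ : DifferentiableAt ℝ θ 0) (hG : HasFDerivAt G (H : E →L[ℝ] E) (θ 0))
    (hv : ContinuousAt v (θ 0)) (hstat : ∀ ε : ℝ, G (θ ε) + ε • v (θ ε) = 0) :
    HasDerivAt θ (-H.symm (v (θ 0))) 0 := by
  have hGθ : HasDerivAt (fun ε => G (θ ε)) (H (deriv θ 0)) 0 :=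
    hG.comp_hasDerivAt 0 hθ.hasDerivAt
  have hGθ' : HasDerivAt (fun ε => G (θ ε)) (-v (θ 0)) 0 := by
    have hsmul := (hasDerivAt_smul_self_of_continuousAt (hv.comp hθ.continuousAt)).neg
    exact hsmul.congr_of_eventuallyEq
      (Eventually.of_forall fun ε => eq_neg_of_add_eq_zero_left (hstat ε))
  have hd : deriv θ 0 = -H.symm (v (θ 0)) := by
    rw [← H.symm_apply_apply (deriv θ 0), hGθ.unique hGθ', map_neg]
  exact hd ▸ hθ.hasDerivAt

theorem stmt_13_general {E : Type*} [NormedAddCommGroup E] [NormedSpace ℝ E]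
    (θ : ℝ → E) (G v : E → E) (H : E ≃L[ℝ] E)
    (hθ : DifferentiableAt ℝ θ 0)
    (hG : DifferentiableAt ℝ G (θ 0))
    (hH : fderiv ℝ G (θ 0) = (H : E →L[ℝ] E))
    (hv : ContinuousAt v (θ 0))
    (hstat : ∀ ε : ℝ, G (θ ε) + ε • v (θ ε) = 0)
    (ℓ : E → ℝ) (hℓ : DifferentiableAt ℝ ℓ (θ 0)) :
    deriv (fun ε : ℝ => ℓ (θ ε)) 0 = -(fderiv ℝ ℓ (θ 0)) (H.symm (v (θ 0))) := by
  have hG' : HasFDerivAt G (H : E →L[ℝ] E) (θ 0) := hH ▸ hG.hasFDerivAt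
  have hθ' := hasDerivAt_of_add_smul_eq_zero hθ hG' hv hstat
  exact (hℓ.hasFDerivAt.comp_hasDerivAt 0 hθ').deriv.trans (map_neg _ _)

/-- Influence Function on a test loss (Eq. 6, scalar-perturbation case): under the
implicit stationarity condition `G(θ ε) + ε • v(θ ε) = 0`, the derivative of the test
loss along the perturbed minimizers is `-(∇ℓ(θ 0)) (H⁻¹ (v (θ 0)))`. -/
theorem stmt_13 {E : Type*} [NormedAddCommGroup E] [NormedSpace ℝ E] [CompleteSpace E]
    (θ : ℝ → E) (G v : E → E) (H : E ≃L[ℝ] E)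
    (hθ : DifferentiableAt ℝ θ 0)
    (hG : DifferentiableAt ℝ G (θ 0))
    (hH : fderiv ℝ G (θ 0) = (H : E →L[ℝ] E))
    (hv : ContinuousAt v (θ 0))
    (hstat : ∀ ε : ℝ, G (θ ε) + ε • v (θ ε) = 0)
    (ℓ : E → ℝ) (hℓ : DifferentiableAt ℝ ℓ (θ 0)) :
    deriv (fun ε : ℝ => ℓ (θ ε)) 0 = -(fderiv ℝ ℓ (θ 0)) (H.symm (v (θ 0))) :=
  stmt_13_general θ G v H hθ hG hH hv hstat ℓ hℓ
end
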